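/- arXiv:2103.15057 — 2 statements merged into one kernel-verified Lean document; each statement's English description precedes it below -/
import Mathlib

section
/- Let L: ℝⁿ → ℝ be an affine map, b ∈ ℝⁿ, and V the minimal affine subspace of ℝⁿ containing b that is defined over ℚ (i.e., spanned by rational points). If L(b) = 0, L has rational coefficients, and L(u) ≥ 0 for all u in a neighborhood of b in V, then L vanishes identically on V. -/
/-- A rational point of ℝⁿ. -/
def IsRationalPoint {n : ℕ} (x : Fin n → ℝ) : Prop := ∀ i, ∃ q : ℚ, x i = (q : ℝ)

/-- An affine subspace is rational if it is the affine span of its rational points. -/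
def IsRationalAffineSubspace {n : ℕ} (V : AffineSubspace ℝ (Fin n → ℝ)) : Prop :=
  V = affineSpan ℝ {x : Fin n → ℝ | x ∈ V ∧ IsRationalPoint x}

/-- If a rational affine function L vanishes at b and is nonnegative on a neighborhood
of b within the minimal rational affine subspace V containing b, then L vanishes on V. -/
theorem stmt_10 (n : ℕ) (b : Fin n → ℝ)
    (V : AffineSubspace ℝ (Fin n → ℝ)) (hbV : b ∈ V)
    (hVrat : IsRationalAffineSubspace V)
    (hVmin : ∀ W : AffineSubspace ℝ (Fin n → ℝ),
      IsRationalAffineSubspace W → b ∈ W → V ≤ W)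
    (c₀ : ℚ) (c : Fin n → ℚ)
    (L : (Fin n → ℝ) → ℝ)
    (hL : ∀ x, L x = (c₀ : ℝ) + ∑ i, (c i : ℝ) * x i)
    (hLb : L b = 0)
    (hnonneg : {x : Fin n → ℝ | 0 ≤ L x} ∈ nhdsWithin b (V : Set (Fin n → ℝ))) :
    ∀ u ∈ V, L u = 0 := by
  intro u huV
  have hb0 : (c₀ : ℝ) + ∑ i, (c i : ℝ) * b i = 0 := by rw [← hL]; exact hLb
  set φ : ℝ → (Fin n → ℝ) := fun t i => b i + t * (u i - b i) with hφ
  have key : ∀ t : ℝ, L (φ t) = t * L u := by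
    intro t
    rw [hL, hL]
    have hsum : ∑ i, (c i : ℝ) * (φ t i) =
        (∑ i, (c i : ℝ) * b i) + t * (∑ i, (c i : ℝ) * u i) - t * (∑ i, (c i : ℝ) * b i) := by
      rw [Finset.mul_sum, Finset.mul_sum, ← Finset.sum_add_distrib, ← Finset.sum_sub_distrib]
      apply Finset.sum_congr rfl
      intro i _
      simp only [hφ]
      ring
    rw [hsum]
    have h1 : ∑ i, (c i : ℝ) * b i = -(c₀ : ℝ) := by linarith
    rw [h1]
    ring
  have hmem : ∀ t, φ t ∈ V := by
    intro t
    have h := V.smul_vsub_vadd_mem t huV hbV hbV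
    have heq : φ t = t • (u -ᵥ b) +ᵥ b := by
      funext i
      simp only [hφ, vsub_eq_sub, vadd_eq_add, Pi.add_apply, Pi.smul_apply, Pi.sub_apply,
        smul_eq_mul]
      ring
    rw [heq]; exact h
  have hcont : Continuous φ := by
    apply continuous_pi
    intro i
    exact continuous_const.add (continuous_id.mul continuous_const)
  have hφ0 : φ 0 = b := by funext i; simp [hφ]
  have htend : Filter.Tendsto φ (nhds 0) (nhdsWithin b (V : Set (Fin n → ℝ))) := by
    rw [tendsto_nhdsWithin_iff]
    refine ⟨?_, Filter.Eventually.of_forall hmem⟩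
    have := hcont.tendsto 0
    rwa [hφ0] at this
  have h2 : φ ⁻¹' {x : Fin n → ℝ | 0 ≤ L x} ∈ nhds (0 : ℝ) := htend hnonneg
  rcases Metric.mem_nhds_iff.mp h2 with ⟨ε, hε, hball⟩
  have hball' : ∀ t : ℝ, |t| < ε → 0 ≤ t * L u := by
    intro t ht
    have : t ∈ Metric.ball (0 : ℝ) ε := by
      simp [Metric.mem_ball, Real.dist_eq, ht]
    have := hball this
    simp only [Set.mem_preimage, Set.mem_setOf_eq] at this
    rwa [key] at this
  have hpos : 0 ≤ (ε / 2) * L u := hball' (ε / 2) (by rw [abs_of_pos (by linarith)]; linarith)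
  have hneg : 0 ≤ (-(ε / 2)) * L u := hball' (-(ε / 2))
    (by rw [abs_neg, abs_of_pos (by linarith)]; linarith)
  nlinarith
end

section
/- Let b ∈ ℝⁿ and let V be the minimal affine subspace of ℝⁿ containing b that is spanned by rational points. If dim V ≥ 1, then there exist rational points b₁, ..., b_{v+1} ∈ ℚⁿ ∩ V (where v = dim V) and positive reals a₁, ..., a_{v+1} with Σaⱼ = 1 and Σaⱼbⱼ = b, such that the convex hull of {b₁, ..., b_{v+1}} contains an open neighborhood of b in V. -/
open Set Filter Topology Module

section RationalPoints

variable {n : ℕ} {x y : Fin n → ℝ}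

lemma IsRationalPoint.sub (hx : IsRationalPoint x) (hy : IsRationalPoint y) :
    IsRationalPoint (x - y) := fun i => by
  obtain ⟨p, hp⟩ := hx i
  obtain ⟨q, hq⟩ := hy i
  exact ⟨p - q, by simp [hp, hq]⟩

lemma IsRationalPoint.add (hx : IsRationalPoint x) (hy : IsRationalPoint y) :
    IsRationalPoint (x + y) := fun i => by
  obtain ⟨p, hp⟩ := hx i
  obtain ⟨q, hq⟩ := hy i
  exact ⟨p + q, by simp [hp, hq]⟩

lemma IsRationalPoint.add_sum_smul {v : ℕ} {u : Fin v → Fin n → ℝ} {c : Fin v → ℝ}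
    (hx : IsRationalPoint x) (hu : ∀ k, IsRationalPoint (u k)) (hc : IsRationalPoint c) :
    IsRationalPoint (∑ k, c k • u k + x) := fun i => by
  choose cu hcu using hu
  choose cc hcc using hc
  obtain ⟨p, hp⟩ := hx i
  exact ⟨∑ k, cc k * cu k i + p, by simp [hp, hcu, hcc]⟩

lemma dense_setOf_isRationalPoint : Dense {x : Fin n → ℝ | IsRationalPoint x} := by
  have hrange :
      {x : Fin n → ℝ | IsRationalPoint x} = range (Pi.map fun _ (q : ℚ) => (q : ℝ)) := by
    ext x
    refine ⟨fun hx => ?_, ?_⟩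
    · choose q hq using hx
      exact ⟨q, funext fun i => (hq i).symm⟩
    · rintro ⟨q, rfl⟩ i
      exact ⟨q i, rfl⟩
  rw [hrange]
  exact DenseRange.piMap fun _ => Rat.denseRange_cast

end RationalPoints

section StandardSimplex

variable {v : ℕ}

def simplexVertex : Fin (v + 1) → Fin v → ℝ := Fin.cons (-1) fun j => Pi.single j 1

noncomputable def simplexWeights (z : Fin v → ℝ) : Fin (v + 1) → ℝ :=
  Fin.cons ((1 - ∑ k, z k) / (v + 1)) fun j => z j + (1 - ∑ k, z k) / (v + 1)

lemma isRationalPoint_simplexVertex (m : Fin (v + 1)) : IsRationalPoint (simplexVertex m) := by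
  intro i
  induction m using Fin.cases with
  | zero => exact ⟨-1, by simp [simplexVertex]⟩
  | succ j =>
    refine ⟨if i = j then 1 else 0, ?_⟩
    simp only [simplexVertex, Fin.cons_succ, Pi.single_apply]
    split_ifs <;> simp

lemma sum_simplexWeights (z : Fin v → ℝ) : ∑ m, simplexWeights z m = 1 := by
  simp only [simplexWeights, Fin.sum_univ_succ, Fin.cons_zero, Fin.cons_succ,
    Finset.sum_add_distrib, Finset.sum_const, Finset.card_univ, Fintype.card_fin, nsmul_eq_mul]
  field_simp
  ring

lemma sum_simplexWeights_smul (z : Fin v → ℝ) :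
    ∑ m, simplexWeights z m • simplexVertex m = z := by
  ext i
  simp [simplexWeights, simplexVertex, Fin.sum_univ_succ, Pi.single_apply]

lemma continuous_simplexWeights : Continuous (simplexWeights (v := v)) := by
  refine continuous_pi fun m => ?_
  induction m using Fin.cases <;>
    simp only [simplexWeights, Fin.cons_zero, Fin.cons_succ] <;> fun_prop

lemma simplexWeights_zero_pos (m : Fin (v + 1)) : 0 < simplexWeights 0 m := by
  induction m using Fin.cases <;> simp [simplexWeights] <;> positivity

lemma sum_simplexWeights_sub_smul_add (r x : Fin v → ℝ) :
    ∑ m, simplexWeights (x - r) m • (r + simplexVertex m) = x := by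
  simp only [smul_add, Finset.sum_add_distrib, ← Finset.sum_smul, sum_simplexWeights, one_smul,
    sum_simplexWeights_smul, add_sub_cancel]

end StandardSimplex

theorem exists_rational_simplex_mem_nhds {v : ℕ} (y : Fin v → ℝ) :
    ∃ (P : Fin (v + 1) → Fin v → ℝ) (a : Fin (v + 1) → ℝ),
      (∀ j, IsRationalPoint (P j)) ∧ (∀ j, 0 < a j) ∧ ∑ j, a j = 1 ∧ ∑ j, a j • P j = y ∧
      convexHull ℝ (range P) ∈ 𝓝 y := by
  set U : Set (Fin v → ℝ) := ⋂ m, {z | 0 < simplexWeights z m}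
  have hU : IsOpen U := isOpen_iInter_of_finite fun m =>
    isOpen_lt continuous_const ((continuous_apply m).comp continuous_simplexWeights)
  obtain ⟨r, hr, hyr⟩ : ∃ r, IsRationalPoint r ∧ y - r ∈ U :=
    dense_setOf_isRationalPoint.exists_mem_open (hU.preimage (continuous_sub_left y))
      ⟨y, show y - y ∈ U by simpa [U] using simplexWeights_zero_pos (v := v)⟩
  refine ⟨fun m => r + simplexVertex m, simplexWeights (y - r),
    fun m => hr.add (isRationalPoint_simplexVertex m), mem_iInter.1 hyr,
    sum_simplexWeights _, sum_simplexWeights_sub_smul_add r y, ?_⟩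
  refine mem_of_superset ((hU.preimage (continuous_sub_right r)).mem_nhds hyr) fun x hx => ?_
  rw [← sum_simplexWeights_sub_smul_add r x]
  exact (convex_convexHull ℝ _).sum_mem (fun m _ => (mem_iInter.1 hx m).le)
    (sum_simplexWeights _) fun m _ => subset_convexHull ℝ _ (mem_range_self m)

lemma image_mem_nhdsWithin_of_leftInvOn {X Y : Type*} [TopologicalSpace X] [TopologicalSpace Y]
    {f : X → Y} {g : Y → X} {s : Set Y} {y : Y} (hg : ContinuousAt g y) (hfg : LeftInvOn f g s)
    {K : Set X} (hK : K ∈ 𝓝 (g y)) : f '' K ∈ 𝓝[s] y :=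
  mem_of_superset (inter_mem_nhdsWithin s (hg hK)) fun x hx => ⟨g x, hx.2, hfg hx.1⟩

section Frame

variable {ι E : Type*} [Fintype ι] [AddCommGroup E] [Module ℝ E]

noncomputable def frameMap (q : E) (u : ι → E) : (ι → ℝ) →ᵃ[ℝ] E :=
  (Fintype.linearCombination ℝ u).toAffineMap + AffineMap.const ℝ (ι → ℝ) q

@[simp]
lemma frameMap_apply (q : E) (u : ι → E) (c : ι → ℝ) : frameMap q u c = ∑ k, c k • u k + q :=
  rfl

lemma frameMap_mem {V : AffineSubspace ℝ E} {q : E} {u : ι → E} (hq : q ∈ V)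
    (hu : ∀ k, u k ∈ V.direction) (c : ι → ℝ) : frameMap q u c ∈ V := by
  simpa using AffineSubspace.vadd_mem_of_mem_direction
    (Submodule.sum_mem _ fun k _ => Submodule.smul_mem _ (c k) (hu k)) hq

end Frame

lemma AffineSubspace.exists_continuous_leftInvOn_frameMap {ι E : Type*} [Fintype ι]
    [NormedAddCommGroup E] [NormedSpace ℝ E] [FiniteDimensional ℝ E] {V : AffineSubspace ℝ E} {q : E} (hq : q ∈ V) (B : Basis ι ℝ V.direction) :
    ∃ g : E → ι → ℝ, Continuous g ∧ LeftInvOn (frameMap q fun k => (B k : E)) g V := by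
  obtain ⟨C, hC⟩ := V.direction.exists_isCompl
  set π := B.equivFun.toLinearMap ∘ₗ V.direction.projectionOnto C hC
  refine ⟨fun x => π (x - q), π.continuous_of_finiteDimensional.comp (continuous_sub_right q),
    fun x hx => ?_⟩
  have hxq : x - q ∈ V.direction := AffineSubspace.vsub_mem_direction hx hq
  have hπ : π (x - q) = B.equivFun ⟨x - q, hxq⟩ := by
    simp [π, Submodule.projectionOnto_apply_of_mem_left hC hxq]
  calc ∑ k, π (x - q) k • (B k : E) + q
    _ = ((∑ k, B.equivFun ⟨x - q, hxq⟩ k • B k : V.direction) : E) + q := by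
        simp only [hπ, Submodule.coe_sum, Submodule.coe_smul]
    _ = x := by rw [B.sum_equivFun, Submodule.coe_mk, sub_add_cancel]

lemma IsRationalAffineSubspace.exists_rationalPoint {n : ℕ} {V : AffineSubspace ℝ (Fin n → ℝ)}
    (hV : IsRationalAffineSubspace V) {b : Fin n → ℝ} (hb : b ∈ V) :
    ∃ q ∈ V, IsRationalPoint q := by
  by_contra! h
  rw [hV, show {x | x ∈ V ∧ IsRationalPoint x} = ∅ from eq_empty_of_forall_notMem fun x hx =>
    h x hx.1 hx.2, AffineSubspace.span_empty] at hb
  exact AffineSubspace.notMem_bot ℝ _ b hb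

lemma IsRationalAffineSubspace.exists_rational_basis {n v : ℕ} {V : AffineSubspace ℝ (Fin n → ℝ)}
    (hV : IsRationalAffineSubspace V) (hv : finrank ℝ V.direction = v) :
    ∃ B : Basis (Fin v) ℝ V.direction, ∀ k, IsRationalPoint (B k : Fin n → ℝ) := by
  set S := {x | x ∈ V ∧ IsRationalPoint x}
  have hspan : Submodule.span ℝ (S -ᵥ S) = V.direction := by
    rw [← vectorSpan_def, ← direction_affineSpan, ← hV]
  have htop := (Submodule.span_span_coe_preimage (R := ℝ) (s := S -ᵥ S)).ge
  set B₀ := (Basis.ofSpan htop).map (LinearEquiv.ofEq _ _ hspan)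
  refine ⟨B₀.reindex (B₀.indexEquiv (finBasisOfFinrankEq ℝ _ hv)), fun k => ?_⟩
  obtain ⟨x, hx, y, hy, hxy⟩ := Basis.ofSpan_subset htop (mem_range_self _)
  simp only [Basis.coe_reindex, Function.comp_apply, B₀, Basis.map_apply,
    LinearEquiv.coe_ofEq_apply]
  rw [← hxy]
  exact hx.2.sub hy.2

theorem stmt_15_general (n : ℕ) (b : Fin n → ℝ)
    (V : AffineSubspace ℝ (Fin n → ℝ)) (hbV : b ∈ V)
    (hVrat : IsRationalAffineSubspace V)
    (v : ℕ) (hv : Module.finrank ℝ V.direction = v) :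
    ∃ (p : Fin (v + 1) → (Fin n → ℝ)) (a : Fin (v + 1) → ℝ),
      (∀ j, p j ∈ V ∧ IsRationalPoint (p j)) ∧
      (∀ j, 0 < a j) ∧ (∑ j, a j = 1) ∧ (∑ j, a j • p j = b) ∧
      convexHull ℝ (Set.range p) ∈ nhdsWithin b (V : Set (Fin n → ℝ)) := by
  obtain ⟨q, hqV, hq⟩ := hVrat.exists_rationalPoint hbV
  obtain ⟨B, hB⟩ := hVrat.exists_rational_basis hv
  set φ := frameMap q fun k => (B k : Fin n → ℝ)
  obtain ⟨g, hg, hφg⟩ := V.exists_continuous_leftInvOn_frameMap hqV B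
  obtain ⟨P, a, hP, ha, hsum, hPb, hnhds⟩ := exists_rational_simplex_mem_nhds (g b)
  refine ⟨φ ∘ P, a, fun j => ⟨frameMap_mem hqV (fun k => (B k).2) _, hq.add_sum_smul hB (hP j)⟩,
    ha, hsum, ?_, ?_⟩
  · rw [← Finset.affineCombination_eq_linear_combination _ _ _ hsum,
      ← Finset.univ.map_affineCombination P a hsum φ,
      Finset.affineCombination_eq_linear_combination _ _ _ hsum,
      hPb, hφg hbV]
  · rw [range_comp, ← AffineMap.image_convexHull]
    exact image_mem_nhdsWithin_of_leftInvOn hg.continuousAt hφg hnhds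

/-- Rational simplex statement: if the minimal rational affine subspace V containing b
has dimension v ≥ 1, there are v+1 rational points of V whose convex hull contains a
neighborhood of b in V, exhibiting b as a positive convex combination of them. -/
theorem stmt_15 (n : ℕ) (b : Fin n → ℝ)
    (V : AffineSubspace ℝ (Fin n → ℝ)) (hbV : b ∈ V)
    (hVrat : IsRationalAffineSubspace V)
    (hVmin : ∀ W : AffineSubspace ℝ (Fin n → ℝ),
      IsRationalAffineSubspace W → b ∈ W → V ≤ W)
    (v : ℕ) (hv : Module.finrank ℝ V.direction = v) (hv1 : 1 ≤ v) :
    ∃ (p : Fin (v + 1) → (Fin n → ℝ)) (a : Fin (v + 1) → ℝ),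
      (∀ j, p j ∈ V ∧ IsRationalPoint (p j)) ∧
      (∀ j, 0 < a j) ∧ (∑ j, a j = 1) ∧ (∑ j, a j • p j = b) ∧
      convexHull ℝ (Set.range p) ∈ nhdsWithin b (V : Set (Fin n → ℝ)) :=
  stmt_15_general n b V hbV hVrat v hv
end
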